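/- Let p ∈ (0,1) and let g : ℝ → [0,1] be a measurable function with ∫_ℝ g(s) φ(s) ds = p. Then ∫_ℝ s · g(s) · φ(s) ds ≤ φ(Φ⁻¹(p)). -/

import Mathlib

/-!
Put `c = -Φ⁻¹(p) = Φ⁻¹(1 - p)`. Since `0 ≤ g ≤ 1`, pointwise `(s - c) g(s) ≤ (s - c)⁺`, with
equality for the indicator of `(c, ∞)`. Integrating against `φ` gives
`∫ s g φ - c p ≤ ∫_{s > c} (s - c) φ(s) ds = φ(c) - c p`, using `φ' = -s φ` and
`∫_{s > c} φ = Φ(-c) = p`; finally `φ(c) = φ(Φ⁻¹(p))` by symmetry.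
-/

open MeasureTheory Real

/-- Standard normal density `φ`. -/
noncomputable def stdGaussPDF (t : ℝ) : ℝ :=
  (Real.sqrt (2 * π))⁻¹ * Real.exp (-t ^ 2 / 2)

/-- Standard normal cumulative distribution function `Φ`. -/
noncomputable def stdGaussCDF (x : ℝ) : ℝ := ∫ t in Set.Iic x, stdGaussPDF t

/-- Standard normal quantile function `Φ⁻¹`. -/
noncomputable def stdGaussQuantile : ℝ → ℝ := Function.invFun stdGaussCDF

open Set Filter Topology ProbabilityTheory

lemma stdGaussPDF_eq_gaussianPDFReal : stdGaussPDF = gaussianPDFReal 0 1 := by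
  ext x
  simp [stdGaussPDF, gaussianPDFReal]

lemma stdGaussPDF_nonneg (x : ℝ) : 0 ≤ stdGaussPDF x := by
  rw [stdGaussPDF_eq_gaussianPDFReal]
  exact gaussianPDFReal_nonneg 0 1 x

lemma stdGaussPDF_neg (x : ℝ) : stdGaussPDF (-x) = stdGaussPDF x := by
  simp [stdGaussPDF]

lemma integrable_stdGaussPDF : Integrable stdGaussPDF := by
  rw [stdGaussPDF_eq_gaussianPDFReal]
  exact integrable_gaussianPDFReal 0 1

lemma integrable_mul_stdGaussPDF : Integrable fun x => x * stdGaussPDF x := by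
  refine ((integrable_mul_exp_neg_mul_sq (b := 2⁻¹) (by norm_num)).const_mul
    (√(2 * π))⁻¹).congr (ae_of_all _ fun x => ?_)
  simp only [stdGaussPDF]
  ring_nf

lemma hasDerivAt_stdGaussPDF (x : ℝ) : HasDerivAt stdGaussPDF (-(x * stdGaussPDF x)) x := by
  have h : HasDerivAt (fun y : ℝ => -y ^ 2 / 2) (-x) x :=
    (((hasDerivAt_pow 2 x).fun_neg).div_const 2).congr_deriv (by norm_num; ring)
  exact (h.exp.const_mul (√(2 * π))⁻¹).congr_deriv (by simp only [stdGaussPDF]; ring)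

lemma tendsto_stdGaussPDF_atTop : Tendsto stdGaussPDF atTop (𝓝 0) := by
  have h : Tendsto (fun x : ℝ => x ^ 2 / 2) atTop atTop :=
    (tendsto_pow_atTop two_ne_zero).atTop_div_const two_pos
  have h' := (Real.tendsto_exp_neg_atTop_nhds_zero.comp h).const_mul (√(2 * π))⁻¹
  rw [mul_zero] at h'
  refine h'.congr fun x => ?_
  simp [stdGaussPDF, neg_div]

lemma integral_Ioi_mul_stdGaussPDF (c : ℝ) :
    ∫ x in Ioi c, x * stdGaussPDF x = stdGaussPDF c := by
  have h := integral_Ioi_of_hasDerivAt_of_tendsto' (a := c) (f := fun y => -stdGaussPDF y)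
    (fun x _ => by simpa using (hasDerivAt_stdGaussPDF x).fun_neg)
    integrable_mul_stdGaussPDF.integrableOn tendsto_stdGaussPDF_atTop.neg
  simpa using h

lemma integral_Ioi_neg_stdGaussPDF (x : ℝ) : ∫ t in Ioi (-x), stdGaussPDF t = stdGaussCDF x := by
  rw [← integral_comp_neg_Iic]
  simp only [stdGaussPDF_neg, stdGaussCDF]

lemma stdGaussCDF_eq_cdf_gaussianReal : stdGaussCDF = cdf (gaussianReal 0 1) := by
  ext x
  rw [cdf_eq_real, measureReal_def, gaussianReal_apply_eq_integral 0 one_ne_zero,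
    ENNReal.toReal_ofReal
      (setIntegral_nonneg measurableSet_Iic fun t _ => gaussianPDFReal_nonneg 0 1 t),
    stdGaussCDF, stdGaussPDF_eq_gaussianPDFReal]

lemma continuous_stdGaussCDF : Continuous stdGaussCDF :=
  continuous_iff_continuousAt.2 fun x =>
    (integrable_stdGaussPDF.integrableOn.continuousOn_Iic_primitive_Iic (a₀ := x + 1)).continuousAt
      (Iic_mem_nhds (lt_add_one x))

lemma stdGaussCDF_stdGaussQuantile {p : ℝ} (hp : p ∈ Ioo (0 : ℝ) 1) :
    stdGaussCDF (stdGaussQuantile p) = p := by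
  have hbot := tendsto_cdf_atBot (gaussianReal 0 1)
  have htop := tendsto_cdf_atTop (gaussianReal 0 1)
  rw [← stdGaussCDF_eq_cdf_gaussianReal] at hbot htop
  exact Function.invFun_eq <| mem_range_of_exists_le_of_exists_ge continuous_stdGaussCDF
    ((hbot.eventually_lt_const hp.1).exists.imp fun _ => le_of_lt)
    ((htop.eventually_const_lt hp.2).exists.imp fun _ => le_of_lt)

lemma sub_mul_le_indicator_Ioi {c s t : ℝ} (ht : t ∈ Icc (0 : ℝ) 1) :
    (s - c) * t ≤ (Ioi c).indicator (fun s => s - c) s := by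
  by_cases hs : s ∈ Ioi c
  · rw [indicator_of_mem hs]
    nlinarith [ht.2, mem_Ioi.1 hs]
  · rw [indicator_of_notMem hs]
    nlinarith [ht.1, not_lt.1 (mt mem_Ioi.2 hs)]

lemma integral_mul_mul_le_of_mem_Icc {μ : Measure ℝ} {w g : ℝ → ℝ} (hw : 0 ≤ w)
    (hwi : Integrable w μ) (hswi : Integrable (fun s => s * w s) μ) (hg : Measurable g)
    (hrange : ∀ s, g s ∈ Icc (0 : ℝ) 1) (c : ℝ) :
    ∫ s, s * g s * w s ∂μ ≤
      (∫ s in Ioi c, s * w s ∂μ) - c * ((∫ s in Ioi c, w s ∂μ) - ∫ s, g s * w s ∂μ) := by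
  have hbound : ∀ᵐ s ∂μ, ‖g s‖ ≤ 1 := ae_of_all _ fun s => by
    rw [Real.norm_of_nonneg (hrange s).1]
    exact (hrange s).2
  have hgwi : Integrable (fun s => g s * w s) μ := hwi.bdd_mul hg.aestronglyMeasurable hbound
  have hsgwi : Integrable (fun s => s * g s * w s) μ :=
    (hswi.bdd_mul hg.aestronglyMeasurable hbound).congr (ae_of_all _ fun s => by ring)
  have hpointwise : ∀ s, (s - c) * g s * w s ≤ (Ioi c).indicator (fun s => (s - c) * w s) s :=
    fun s => by
      rw [indicator_mul_left]
      exact mul_le_mul_of_nonneg_right (sub_mul_le_indicator_Ioi (hrange s)) (hw s)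
  have hle : ∫ s, (s * g s * w s - c * (g s * w s)) ∂μ ≤
      ∫ s, (Ioi c).indicator (fun s => s * w s - c * w s) s ∂μ :=
    integral_mono (hsgwi.sub (hgwi.const_mul c))
      ((hswi.sub (hwi.const_mul c)).indicator measurableSet_Ioi) fun s => by
        simpa only [sub_mul, mul_assoc] using hpointwise s
  rw [integral_sub hsgwi (hgwi.const_mul c), integral_indicator measurableSet_Ioi,
    integral_sub hswi.integrableOn (hwi.const_mul c).integrableOn, integral_const_mul,
    integral_const_mul] at hle
  linarith

/-- **Value of the unconstrained one-dimensional problem.** Every measurable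
`g : ℝ → [0,1]` with `∫ g φ = p` satisfies `∫ s g(s) φ(s) ds ≤ φ(Φ⁻¹(p))`. -/
theorem unconstrained_value_bound (p : ℝ) (hp : p ∈ Set.Ioo (0 : ℝ) 1)
    (g : ℝ → ℝ) (hgmeas : Measurable g)
    (hrange : ∀ s, g s ∈ Set.Icc (0 : ℝ) 1)
    (hmass : ∫ s, g s * stdGaussPDF s = p) :
    ∫ s, s * g s * stdGaussPDF s ≤ stdGaussPDF (stdGaussQuantile p) := by
  set q := stdGaussQuantile p
  have htail_mass : ∫ s in Ioi (-q), stdGaussPDF s = p := by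
    rw [integral_Ioi_neg_stdGaussPDF, stdGaussCDF_stdGaussQuantile hp]
  have htail_moment : ∫ s in Ioi (-q), s * stdGaussPDF s = stdGaussPDF q := by
    rw [integral_Ioi_mul_stdGaussPDF, stdGaussPDF_neg]
  calc ∫ s, s * g s * stdGaussPDF s
      ≤ (∫ s in Ioi (-q), s * stdGaussPDF s)
          - -q * ((∫ s in Ioi (-q), stdGaussPDF s) - ∫ s, g s * stdGaussPDF s) :=
        integral_mul_mul_le_of_mem_Icc stdGaussPDF_nonneg integrable_stdGaussPDF
          integrable_mul_stdGaussPDF hgmeas hrange (-q)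
    _ = stdGaussPDF q := by rw [htail_mass, htail_moment, hmass]; ring
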